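/- arXiv:2401.13573 — 7 statements merged into one kernel-verified Lean document; each statement's English description precedes it below -/
import Mathlib

section
/- Let S be a numerical semigroup, m ≥ 1 with m ∈ S. Let D_A be the set of the m smallest elements of Ap(S, m), and D_B := {0, m, 2m, …, (n−1)m}. Then D_A, D_B ⊆ S, the sum map on D_A × D_B is injective, and max(D_A) + max(D_B) + 1 = c(S) + mn. -/
/-- A numerical semigroup: a cofinite additive submonoid of ℕ. -/
def IsNumericalSemigroup (S : Set ℕ) : Prop :=
  0 ∈ S ∧ (∀ a ∈ S, ∀ b ∈ S, a + b ∈ S) ∧ (Sᶜ : Set ℕ).Finite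

/-- The sgConductor of a numerical semigroup: least c with [c,∞) ⊆ S. -/
noncomputable def sgConductor (S : Set ℕ) : ℕ :=
  sInf {c | ∀ n, c ≤ n → n ∈ S}

/-- Construction: D_A = Ap(S,m) and D_B = {0, m, …, (n−1)m} is a solution
to the AG polynomial code problem with recovery threshold c(S) + mn. -/
theorem stmt4 (S : Set ℕ) (hS : IsNumericalSemigroup S) (m n : ℕ)
    (hm : 1 ≤ m) (hmS : m ∈ S) (hn : 1 ≤ n) :
    ({s ∈ S | ¬ ∃ t ∈ S, t + m = s} : Set ℕ) ⊆ S ∧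
    (fun i => i * m) '' Set.Iio n ⊆ S ∧
    Set.InjOn (fun p : ℕ × ℕ => p.1 + p.2)
      (({s ∈ S | ¬ ∃ t ∈ S, t + m = s} : Set ℕ) ×ˢ ((fun i => i * m) '' Set.Iio n)) ∧
    sSup ({s ∈ S | ¬ ∃ t ∈ S, t + m = s} : Set ℕ) + sSup ((fun i => i * m) '' Set.Iio n) + 1
      = sgConductor S + m * n := by
  obtain ⟨h0, hadd, hcof⟩ := hS
  -- multiples of m are in S
  have hmul : ∀ k : ℕ, k * m ∈ S := by
    intro k
    induction k with
    | zero => simpa using h0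
    | succ k ih =>
      have := hadd _ ih _ hmS
      simpa [Nat.succ_mul] using this
  have hmulS : ∀ a ∈ S, ∀ k : ℕ, a + k * m ∈ S := fun a ha k => hadd _ ha _ (hmul k)
  -- conductor set nonempty
  obtain ⟨N, hN⟩ := hcof.bddAbove
  have hne : {c | ∀ k, c ≤ k → k ∈ S}.Nonempty := by
    refine ⟨N + 1, fun k hk => ?_⟩
    by_contra hkS
    exact absurd (hN hkS) (by omega)
  set c := sgConductor S with hc
  have hcond : ∀ k, c ≤ k → k ∈ S := Nat.sInf_mem hne
  have hmin : 1 ≤ c → c - 1 ∉ S := by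
    intro h1 hcS
    have : c ≤ c - 1 := Nat.sInf_le (fun k hk => by
      rcases Nat.eq_or_lt_of_le hk with h | h
      · exact h ▸ hcS
      · exact hcond k (by omega))
    omega
  set A : Set ℕ := {s ∈ S | ¬ ∃ t ∈ S, t + m = s} with hA
  -- A has max c + m - 1
  have hmemA : c + m - 1 ∈ A := by
    constructor
    · exact hcond _ (by omega)
    · rintro ⟨t, htS, ht⟩
      rcases Nat.eq_zero_or_pos c with h | h
      · omega
      · have : t = c - 1 := by omega
        exact hmin h (this ▸ htS)
  have hubA : ∀ s ∈ A, s ≤ c + m - 1 := by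
    rintro s ⟨hsS, hs⟩
    by_contra h
    exact hs ⟨s - m, hcond _ (by omega), by omega⟩
  have hsupA : sSup A = c + m - 1 :=
    le_antisymm (csSup_le ⟨_, hmemA⟩ hubA) (le_csSup ⟨c + m - 1, hubA⟩ hmemA)
  -- B
  set B : Set ℕ := (fun i => i * m) '' Set.Iio n with hB
  have hmemB : (n - 1) * m ∈ B := ⟨n - 1, by simp; omega, rfl⟩
  have hubB : ∀ s ∈ B, s ≤ (n - 1) * m := by
    rintro s ⟨i, hi, rfl⟩
    exact Nat.mul_le_mul_right m (by simp at hi; omega)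
  have hsupB : sSup B = (n - 1) * m :=
    le_antisymm (csSup_le ⟨_, hmemB⟩ hubB) (le_csSup ⟨(n - 1) * m, hubB⟩ hmemB)
  refine ⟨fun s hs => hs.1, fun s hs => by obtain ⟨i, _, rfl⟩ := hs; exact hmul i, ?_, ?_⟩
  · -- injectivity
    rintro ⟨a1, b1⟩ ⟨ha1, hb1⟩ ⟨a2, b2⟩ ⟨ha2, hb2⟩ heq
    simp only at heq
    obtain ⟨i1, hi1, rfl⟩ := hb1
    obtain ⟨i2, hi2, rfl⟩ := hb2
    simp only at *
    -- wlog-style: show i1 = i2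
    have key : ∀ x y : ℕ, ∀ j k : ℕ, x ∈ A → y ∈ A → x + j * m = y + k * m → j < k → False := by
      intro x y j k hx hy hxy hjk
      have hyk : y + (k - j - 1) * m ∈ S := hmulS y hy.1 _
      exact hx.2 ⟨y + (k - j - 1) * m, hyk, by
        have : (k - j - 1) * m + m = (k - j) * m := by
          have hd : k - j = k - j - 1 + 1 := by omega
          calc (k - j - 1) * m + m = (k - j - 1 + 1) * m := (Nat.succ_mul _ _).symm
            _ = (k - j) * m := by rw [← hd]
        have h2 : x = y + (k - j) * m := by
          have := Nat.sub_mul k j m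
          have hle : j * m ≤ k * m := Nat.mul_le_mul_right m (le_of_lt hjk)
          omega
        omega⟩
    have hij : i1 = i2 := by
      rcases lt_trichotomy i1 i2 with h | h | h
      · exact absurd (key a1 a2 i1 i2 ha1 ha2 heq h) (by simp)
      · exact h
      · exact absurd (key a2 a1 i2 i1 ha2 ha1 heq.symm h) (by simp)
    subst hij
    have : a1 = a2 := by omega
    simp [this]
  · rw [hsupA, hsupB]
    obtain ⟨k, rfl⟩ := Nat.exists_eq_add_of_le hn
    have h1 : m * (1 + k) = m + m * k := by ring
    have h2 : (1 + k - 1) * m = k * m := by simp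
    have h3 : k * m = m * k := Nat.mul_comm k m
    omega
end

section
/- Let S be a numerical semigroup, m ≥ 1. Define D_A := {c(S), c(S)+1, …, c(S)+m−1} and D_B := {m_1, …, m_n} where m_1 := 0 and m_{i+1} := min{s ∈ S : s ≥ m_i + m}. Then D_A, D_B ⊆ S and the sum map (a,b) ↦ a+b on D_A × D_B is injective. If moreover m ∈ S, then max(D_A) + max(D_B) + 1 = c(S) + mn. -/
lemma sgConductor_spec (S : Set ℕ) (hS : IsNumericalSemigroup S) :
    ∀ k, sgConductor S ≤ k → k ∈ S := by
  have hne : {c | ∀ n, c ≤ n → n ∈ S}.Nonempty := by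
    refine ⟨hS.2.2.toFinset.sup id + 1, fun k hk => ?_⟩
    by_contra h
    have hmem : k ∈ hS.2.2.toFinset := by simpa using h
    have := Finset.le_sup (f := id) hmem
    simp only [id] at this
    omega
  exact Nat.sInf_mem hne

/-- Construction: D_A = {c,…,c+m−1}, D_B = {m_1,…,m_n} with m_1 = 0 and
m_{i+1} = min{s ∈ S : s ≥ m_i + m}, is a solution; if m ∈ S its recovery
threshold is c(S) + mn. -/
theorem stmt5 (S : Set ℕ) (hS : IsNumericalSemigroup S) (m n : ℕ) (hm : 1 ≤ m) (hn : 1 ≤ n) :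
    ∀ seq : ℕ → ℕ, seq 0 = 0 → (∀ i, seq (i + 1) = sInf {s ∈ S | seq i + m ≤ s}) →
    Set.Ico (sgConductor S) (sgConductor S + m) ⊆ S ∧
    seq '' Set.Iio n ⊆ S ∧
    Set.InjOn (fun p : ℕ × ℕ => p.1 + p.2)
      ((Set.Ico (sgConductor S) (sgConductor S + m)) ×ˢ (seq '' Set.Iio n)) ∧
    (m ∈ S →
      sSup (Set.Ico (sgConductor S) (sgConductor S + m)) + sSup (seq '' Set.Iio n) + 1
        = sgConductor S + m * n) := by
  intro seq h0 hrec
  set c := sgConductor S with hc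
  have hcS : ∀ k, c ≤ k → k ∈ S := sgConductor_spec S hS
  have hstep : ∀ i, seq (i + 1) ∈ S ∧ seq i + m ≤ seq (i + 1) ∧
      ∀ s ∈ S, seq i + m ≤ s → seq (i + 1) ≤ s := by
    intro i
    have hne : {s ∈ S | seq i + m ≤ s}.Nonempty :=
      ⟨max c (seq i + m), hcS _ (le_max_left _ _), le_max_right _ _⟩
    have hmem := Nat.sInf_mem hne
    rw [← hrec i] at hmem
    exact ⟨hmem.1, hmem.2, fun s hs hs' => by
      rw [hrec i]; exact Nat.sInf_le ⟨hs, hs'⟩⟩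
  have hSeqS : ∀ i, seq i ∈ S := by
    intro i
    cases i with
    | zero => rw [h0]; exact hS.1
    | succ i => exact (hstep i).1
  have hmono : ∀ i j, i < j → seq i + m ≤ seq j := by
    intro i j hij
    induction j with
    | zero => omega
    | succ j ih =>
      rcases Nat.lt_succ_iff_lt_or_eq.mp hij with h | h
      · have := ih h
        have := (hstep j).2.1
        omega
      · subst h; exact (hstep i).2.1
  refine ⟨fun x hx => hcS x hx.1, ?_, ?_, ?_⟩
  · rintro _ ⟨i, _, rfl⟩; exact hSeqS i
  · rintro ⟨a, b⟩ ⟨ha, hb⟩ ⟨a', b'⟩ ⟨ha', hb'⟩ heq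
    obtain ⟨i, hi, rfl⟩ := hb
    obtain ⟨j, hj, rfl⟩ := hb'
    simp only at heq
    simp only [Set.mem_Ico] at ha ha'
    rcases lt_trichotomy i j with h | h | h
    · have := hmono i j h; omega
    · subst h
      have : a = a' := by omega
      subst this; rfl
    · have := hmono j i h; omega
  · intro hmS
    have hseq_eq : ∀ i, seq i = m * i := by
      intro i
      induction i with
      | zero => simpa using h0
      | succ i ih =>
        have h1 := (hstep i).2.1
        have h2 := (hstep i).2.2 (seq i + m) (hS.2.1 _ (hSeqS i) _ hmS) le_rfl
        have : seq (i + 1) = seq i + m := le_antisymm h2 h1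
        rw [this, ih]; ring
    have h1 : sSup (Set.Ico c (c + m)) = c + m - 1 := by
      apply IsGreatest.csSup_eq
      constructor
      · simp only [Set.mem_Ico]; omega
      · intro x hx
        simp only [Set.mem_Ico] at hx
        omega
    have h2 : sSup (seq '' Set.Iio n) = m * (n - 1) := by
      apply IsGreatest.csSup_eq
      constructor
      · exact ⟨n - 1, by simp; omega, hseq_eq (n - 1)⟩
      · rintro _ ⟨i, hi, rfl⟩
        rw [hseq_eq]
        simp only [Set.mem_Iio] at hi
        exact Nat.mul_le_mul_left m (by omega)
    rw [h1, h2]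
    obtain ⟨n', rfl⟩ : ∃ n', n = n' + 1 := ⟨n - 1, by omega⟩
    have : m * (n' + 1) = m * n' + m := by ring
    simp only [Nat.add_sub_cancel]
    omega
end

section
/- Let S be a numerical semigroup. Define the partial order a ≤_S b iff b − a ∈ S (for a ≤ b in ℕ). Let D_A, D_B ⊆ S be an optimal solution to the AG matdot code problem for some d, and let s ∈ S with min(D_A) ≤ s ≤ max(D_A). Then s ≤_S d if and only if s ∈ D_A. -/
/-- A solution to the AG matdot code problem with parameter m and sum value d. -/
def MatdotSolution (S : Set ℕ) (m : ℕ) (DA DB : Set ℕ) (d : ℕ) : Prop :=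
  DA ⊆ S ∧ DB ⊆ S ∧ DA.Finite ∧ DB.Finite ∧ DA.ncard = m ∧ DB.ncard = m ∧
  {p : ℕ × ℕ | p ∈ DA ×ˢ DB ∧ p.1 + p.2 = d}.ncard = m

/-!
In a solution the `m` pairs summing to `d` form a bijection, so `D_B = d - D_A`, and
`max D_B = d - min D_A`. If `s ≤_S d` but `s ∉ D_A`, exchange `max D_A` for `s`: the set
`D_A' = (D_A \ {max D_A}) ∪ {s}` with `D_B' = d - D_A'` is again a solution. Since
`s < max D_A` its `max D_A'` is smaller, and since `min D_A ≤ s` its `max D_B'` is no larger,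
contradicting optimality. Conversely `s ∈ D_A` gives `d - s ∈ D_B ⊆ S`.
-/

def sumPairs (A B : Set ℕ) (d : ℕ) : Set (ℕ × ℕ) :=
  {p | p ∈ A ×ˢ B ∧ p.1 + p.2 = d}

lemma exists_add_eq_of_ncard_le_ncard_sumPairs {A B : Set ℕ} {d : ℕ} (hA : A.Finite)
    (h : A.ncard ≤ (sumPairs A B d).ncard) : ∀ a ∈ A, ∃ b ∈ B, a + b = d := by
  have hinj : Set.InjOn Prod.fst (sumPairs A B d) := by
    rintro ⟨a, b⟩ ⟨-, hab⟩ ⟨a', b'⟩ ⟨-, hab'⟩ (rfl : a = a')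
    simp only at hab hab'
    rw [show b = b' by omega]
  have himage : Prod.fst '' sumPairs A B d = A :=
    Set.eq_of_subset_of_ncard_le (by rintro _ ⟨p, ⟨hp, -⟩, rfl⟩; exact hp.1)
      (by rwa [hinj.ncard_image]) hA
  intro a ha
  rw [← himage] at ha
  obtain ⟨⟨a, b⟩, ⟨hp, hsum⟩, rfl⟩ := ha
  exact ⟨b, hp.2, hsum⟩

namespace MatdotSolution

variable {S : Set ℕ} {m d : ℕ} {DA DB : Set ℕ}

lemma exists_add_eq (h : MatdotSolution S m DA DB d) : ∀ a ∈ DA, ∃ b ∈ DB, a + b = d := by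
  obtain ⟨-, -, hA, -, hAm, -, hP⟩ := h
  exact exists_add_eq_of_ncard_le_ncard_sumPairs hA (hAm.trans hP.symm).le

lemma le_of_mem (h : MatdotSolution S m DA DB d) {a : ℕ} (ha : a ∈ DA) : a ≤ d := by
  obtain ⟨b, -, hab⟩ := h.exists_add_eq a ha
  omega

lemma sub_mem (h : MatdotSolution S m DA DB d) {a : ℕ} (ha : a ∈ DA) : d - a ∈ DB := by
  obtain ⟨b, hb, hab⟩ := h.exists_add_eq a ha
  rwa [show d - a = b by omega]

end MatdotSolution

lemma matdotSolution_image_sub {S A : Set ℕ} {d : ℕ} (hA : A.Finite) (hAS : A ⊆ S)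
    (hle : ∀ a ∈ A, a ≤ d) (hsub : ∀ a ∈ A, d - a ∈ S) :
    MatdotSolution S A.ncard A ((d - ·) '' A) d := by
  have hinj : Set.InjOn (d - ·) A := fun a ha a' ha' h => by
    have := hle a ha; have := hle a' ha'; simp only at h; omega
  have hpairs : sumPairs A ((d - ·) '' A) d = (fun a => (a, d - a)) '' A := by
    ext ⟨a, b⟩
    simp only [sumPairs, Set.mem_ofPred_eq, Set.mem_prod, Set.mem_image, Prod.mk.injEq]
    constructor
    · rintro ⟨⟨ha, -⟩, hab⟩
      exact ⟨a, ha, rfl, by omega⟩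
    · rintro ⟨a, ha, rfl, rfl⟩
      exact ⟨⟨ha, a, ha, rfl⟩, by have := hle a ha; omega⟩
  refine ⟨hAS, ?_, hA, hA.image _, rfl, hinj.ncard_image, ?_⟩
  · rintro _ ⟨a, ha, rfl⟩
    exact hsub a ha
  · change (sumPairs _ _ _).ncard = _
    rw [hpairs, Set.ncard_image_of_injective _ fun a a' h => congrArg Prod.fst h]

lemma MatdotSolution.exchange {S DA DB : Set ℕ} {m d s b : ℕ}
    (h : MatdotSolution S m DA DB d) (hsS : s ∈ S) (hsd : s ≤ d) (hdsS : d - s ∈ S)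
    (hsA : s ∉ DA) (hb : b ∈ DA) :
    MatdotSolution S m (insert s (DA \ {b})) ((d - ·) '' insert s (DA \ {b})) d := by
  obtain ⟨hAS, hBS, hA, -, hAm, -⟩ := id h
  have hcard : (insert s (DA \ {b})).ncard = m := (Set.ncard_exchange hsA hb).trans hAm
  refine hcard ▸ matdotSolution_image_sub (hA.sdiff.insert s)
    (Set.insert_subset hsS (Set.sdiff_subset.trans hAS)) ?_ ?_
  · rintro a (rfl | ⟨ha, -⟩)
    exacts [hsd, h.le_of_mem ha]
  · rintro a (rfl | ⟨ha, -⟩)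
    exacts [hdsS, hBS (h.sub_mem ha)]

lemma csSup_insert_diff_csSup_lt {α : Type*} [ConditionallyCompleteLinearOrder α] {A : Set α}
    {s : α} (hA : A.Finite) (hs : s < sSup A) : sSup (insert s (A \ {sSup A})) < sSup A := by
  obtain h | ⟨ha, hne⟩ := (Set.insert_nonempty s _).csSup_mem (hA.sdiff.insert s)
  · rwa [h]
  · exact (le_csSup hA.bddAbove ha).lt_of_ne hne

lemma csSup_image_sub_le {A : Set ℕ} {c d : ℕ} (hA : A.Nonempty) (hc : ∀ a ∈ A, c ≤ a) :
    sSup ((d - ·) '' A) ≤ d - c :=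
  csSup_le (hA.image _) (by rintro _ ⟨a, ha, rfl⟩; exact Nat.sub_le_sub_left (hc a ha) d)

theorem stmt7_general (S : Set ℕ) (m : ℕ) (hm : 1 ≤ m)
    (DA DB : Set ℕ) (d : ℕ) (hsol : MatdotSolution S m DA DB d)
    (hopt : ∀ DA' DB' d', MatdotSolution S m DA' DB' d' →
      sSup DA + sSup DB ≤ sSup DA' + sSup DB')
    (s : ℕ) (hs : s ∈ S) (hlo : sInf DA ≤ s) (hhi : s ≤ sSup DA) :
    (∃ t ∈ S, s + t = d) ↔ s ∈ DA := by
  obtain ⟨-, hDBS, hDAfin, hDBfin, hDAm, -⟩ := id hsol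
  have hDAne : DA.Nonempty := Set.nonempty_of_ncard_ne_zero (by omega)
  have hmax : sSup DA ∈ DA := hDAne.csSup_mem hDAfin
  refine ⟨fun ⟨t, ht, hst⟩ => ?_, fun hsA => ⟨d - s, ?_, by have := hsol.le_of_mem hsA; omega⟩⟩
  · by_contra hsA
    have hlt : s < sSup DA := hhi.lt_of_ne fun h => hsA (h ▸ hmax)
    have hsol' := hsol.exchange hs (by omega) (by rwa [show d - s = t by omega]) hsA hmax
    have hA' := csSup_insert_diff_csSup_lt hDAfin hlt
    have hB' : sSup ((d - ·) '' insert s (DA \ {sSup DA})) ≤ sSup DB := by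
      refine (csSup_image_sub_le (Set.insert_nonempty _ _) ?_).trans
        (le_csSup hDBfin.bddAbove (hsol.sub_mem (Nat.sInf_mem hDAne)))
      rintro a (rfl | ⟨ha, -⟩)
      exacts [hlo, Nat.sInf_le ha]
    have := hopt _ _ _ hsol'
    omega
  · exact hDBS (hsol.sub_mem hsA)

/-- In an optimal matdot solution, for s ∈ S with min(D_A) ≤ s ≤ max(D_A),
one has s ≤_S d iff s ∈ D_A. -/
theorem stmt7 (S : Set ℕ) (hS : IsNumericalSemigroup S) (m : ℕ) (hm : 1 ≤ m)
    (DA DB : Set ℕ) (d : ℕ) (hsol : MatdotSolution S m DA DB d)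
    (hopt : ∀ DA' DB' d', MatdotSolution S m DA' DB' d' →
      sSup DA + sSup DB ≤ sSup DA' + sSup DB')
    (s : ℕ) (hs : s ∈ S) (hlo : sInf DA ≤ s) (hhi : s ≤ sSup DA) :
    (∃ t ∈ S, s + t = d) ↔ s ∈ DA :=
  stmt7_general S m hm DA DB d hsol hopt s hs hlo hhi
end

section
/- Let S be a numerical semigroup with conductor c(S), and let D_A, D_B be an optimal solution to the AG matdot code problem with parameter m. Then min(D_A) ≤ c(S) and max(D_A) ≥ d − c(S), where d is the associated sum value. -/
lemma conductor_spec {S : Set ℕ} (hS : IsNumericalSemigroup S) :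
    ∀ n, sgConductor S ≤ n → n ∈ S := by
  have hne : {c | ∀ n, c ≤ n → n ∈ S}.Nonempty := by
    obtain ⟨-, -, hfin⟩ := hS
    refine ⟨hfin.toFinset.sup id + 1, fun n hn => ?_⟩
    by_contra hns
    have hmem : n ∈ hfin.toFinset := by simpa using hns
    have := Finset.le_sup (f := id) hmem
    simp only [id] at this
    omega
  exact Nat.sInf_mem hne

lemma swap_sol {S : Set ℕ} {m : ℕ} {DA DB : Set ℕ} {d : ℕ}
    (h : MatdotSolution S m DA DB d) : MatdotSolution S m DB DA d := by
  obtain ⟨h1, h2, h3, h4, h5, h6, h7⟩ := h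
  refine ⟨h2, h1, h4, h3, h6, h5, ?_⟩
  have heq : {p : ℕ × ℕ | p ∈ DB ×ˢ DA ∧ p.1 + p.2 = d}
      = Prod.swap '' {p : ℕ × ℕ | p ∈ DA ×ˢ DB ∧ p.1 + p.2 = d} := by
    rw [Set.image_swap_eq_preimage_swap]
    ext ⟨b, a⟩
    simp only [Set.mem_setOf_eq, Set.mem_preimage, Set.mem_prod, Prod.fst_swap,
      Prod.snd_swap, Prod.swap_prod_mk]
    constructor
    · rintro ⟨⟨hb, ha⟩, hd⟩; exact ⟨⟨ha, hb⟩, by omega⟩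
    · rintro ⟨⟨ha, hb⟩, hd⟩; exact ⟨⟨hb, ha⟩, by omega⟩
  rw [heq, Set.ncard_image_of_injective _ Prod.swap_injective]
  exact h7

lemma shift_sol {S : Set ℕ} {m : ℕ} {DA DB : Set ℕ} {d : ℕ} (hm : 1 ≤ m)
    (h : MatdotSolution S m DA DB d) (hge : ∀ a ∈ DA, 1 ≤ a ∧ a - 1 ∈ S) :
    MatdotSolution S m ((· - 1) '' DA) DB (d - 1) := by
  obtain ⟨h1, h2, h3, h4, h5, h6, h7⟩ := h
  have hinj : Set.InjOn (· - 1) DA := fun a ha b hb hab => by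
    have := (hge a ha).1; have := (hge b hb).1; simp only at hab; omega
  have hd : 1 ≤ d := by
    have hne : {p : ℕ × ℕ | p ∈ DA ×ˢ DB ∧ p.1 + p.2 = d}.Nonempty :=
      Set.nonempty_of_ncard_ne_zero (by omega)
    obtain ⟨⟨a, b⟩, ⟨hab, hd⟩⟩ := hne
    have := (hge a hab.1).1
    omega
  refine ⟨?_, h2, h3.image _, h4, ?_, h6, ?_⟩
  · rintro x ⟨a, ha, rfl⟩; exact (hge a ha).2
  · rw [Set.ncard_image_of_injOn hinj]; exact h5
  · have heq : {p : ℕ × ℕ | p ∈ ((· - 1) '' DA) ×ˢ DB ∧ p.1 + p.2 = d - 1}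
        = (fun p : ℕ × ℕ => (p.1 - 1, p.2)) ''
          {p : ℕ × ℕ | p ∈ DA ×ˢ DB ∧ p.1 + p.2 = d} := by
      ext ⟨x, b⟩
      simp only [Set.mem_setOf_eq, Set.mem_prod, Set.mem_image, Prod.mk.injEq]
      constructor
      · rintro ⟨⟨⟨a, ha, rfl⟩, hb⟩, hsum⟩
        have ha1 := (hge a ha).1
        refine ⟨(a, b), ⟨⟨ha, hb⟩, ?_⟩, rfl, rfl⟩
        omega
      · rintro ⟨⟨a, b'⟩, ⟨⟨ha, hb⟩, hsum⟩, hx, hb'⟩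
        subst hx; subst hb'
        have ha1 := (hge a ha).1
        exact ⟨⟨⟨a, ha, rfl⟩, hb⟩, by omega⟩
    rw [heq, Set.ncard_image_of_injOn]
    · exact h7
    · rintro ⟨a, b⟩ ⟨⟨ha, _⟩, _⟩ ⟨a', b'⟩ ⟨⟨ha', _⟩, _⟩ hp
      have := (hge a ha).1; have := (hge a' ha').1
      simp only [Prod.mk.injEq] at hp ⊢
      omega

/-- In an optimal matdot solution, min(D_A) ≤ c(S) and max(D_A) ≥ d − c(S). -/
theorem stmt8 (S : Set ℕ) (hS : IsNumericalSemigroup S) (m : ℕ) (hm : 1 ≤ m)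
    (DA DB : Set ℕ) (d : ℕ) (hsol : MatdotSolution S m DA DB d)
    (hopt : ∀ DA' DB' d', MatdotSolution S m DA' DB' d' →
      sSup DA + sSup DB ≤ sSup DA' + sSup DB') :
    sInf DA ≤ sgConductor S ∧ d ≤ sSup DA + sgConductor S := by
  have hc := conductor_spec hS
  set c := sgConductor S with hcdef
  obtain ⟨hA, hB, hAfin, hBfin, hAcard, hBcard, hpairs⟩ := hsol
  have hAne : DA.Nonempty := Set.nonempty_of_ncard_ne_zero (by omega)
  have hBne : DB.Nonempty := Set.nonempty_of_ncard_ne_zero (by omega)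
  constructor
  · by_contra hlt
    push_neg at hlt
    have hge : ∀ a ∈ DA, 1 ≤ a ∧ a - 1 ∈ S := fun a ha => by
      have h1 := Nat.sInf_le ha
      exact ⟨by omega, hc _ (by omega)⟩
    have hsol' := shift_sol hm ⟨hA, hB, hAfin, hBfin, hAcard, hBcard, hpairs⟩ hge
    have hle := hopt _ _ _ hsol'
    have h1 : sSup ((· - 1) '' DA) ≤ sSup DA - 1 := by
      apply csSup_le (hAne.image _)
      rintro x ⟨a, ha, rfl⟩
      have := le_csSup hAfin.bddAbove ha
      show a - 1 ≤ sSup DA - 1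
      omega
    have h2 : 1 ≤ sSup DA := (hge _ (hAne.csSup_mem hAfin)).1
    omega
  · by_contra hlt
    push_neg at hlt
    have hP : Prod.snd '' {p : ℕ × ℕ | p ∈ DA ×ˢ DB ∧ p.1 + p.2 = d} = DB := by
      apply Set.eq_of_subset_of_ncard_le
      · rintro b ⟨⟨a, b⟩, ⟨⟨ha, hb⟩, _⟩, rfl⟩; exact hb
      · rw [Set.ncard_image_of_injOn, hpairs, hBcard]
        rintro ⟨a, b⟩ ⟨_, hs⟩ ⟨a', b'⟩ ⟨_, hs'⟩ h
        simp only [Set.mem_setOf_eq] at hs hs'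
        simp only at h
        simp only [Prod.mk.injEq]
        omega
      · exact hBfin
    have hge : ∀ b ∈ DB, 1 ≤ b ∧ b - 1 ∈ S := by
      intro b hb
      rw [← hP] at hb
      obtain ⟨⟨a, b'⟩, ⟨⟨ha, _⟩, hsum⟩, rfl⟩ := hb
      simp only [Set.mem_setOf_eq] at hsum
      have hale : a ≤ sSup DA := le_csSup hAfin.bddAbove ha
      exact ⟨by omega, hc _ (by omega)⟩
    have hsol' := swap_sol (shift_sol hm
      (swap_sol ⟨hA, hB, hAfin, hBfin, hAcard, hBcard, hpairs⟩) hge)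
    have hle := hopt _ _ _ hsol'
    have h1 : sSup ((· - 1) '' DB) ≤ sSup DB - 1 := by
      apply csSup_le (hBne.image _)
      rintro x ⟨b, hb, rfl⟩
      have := le_csSup hBfin.bddAbove hb
      show b - 1 ≤ sSup DB - 1
      omega
    have h2 : 1 ≤ sSup DB := (hge _ (hBne.csSup_mem hBfin)).1
    omega
end

section
/- Let S be a numerical semigroup with conductor c and define Δ(δ) := δ + 2·|S ∩ [δ, c−1]| for δ ∈ S ∩ [0, c]. Then there exists δ ∈ S ∩ [0, c] with δ ≥ c/2 at which Δ attains its maximum over S ∩ [0, c]. -/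
/-!
Let `c` be the conductor. The involution `x ↦ c - 1 - x` maps elements of `S` below `c` to
gaps, and it preserves every interval `[a, c - a)`, so `S` fills at most half of such an
interval. Now let `δ < c / 2` and let `δ'` be the least element of `S` that is `≥ c - δ`. Every
element of `S ∩ [δ, δ')` lies in `[δ, c - δ)`, so passing from `δ` to `δ'` loses at most
`c - 2δ` in the term `2 · |S ∩ [δ, c)|` while gaining at least `c - 2δ` in the first term.
Hence a maximiser of `Δ` can always be moved into `[c / 2, c]`.
-/

open Set

lemma two_mul_ncard_inter_le_of_injOn {α : Type*} {s t : Set α} (ht : t.Finite) (f : α → α)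
    (hmaps : MapsTo f (s ∩ t) (t \ s)) (hinj : InjOn f (s ∩ t)) :
    2 * (s ∩ t).ncard ≤ t.ncard := by
  have hle : (s ∩ t).ncard ≤ (t \ s).ncard :=
    ncard_le_ncard_of_injOn f hmaps hinj (ht.subset sdiff_subset)
  have hsplit := ncard_inter_add_ncard_sdiff_eq_ncard t s ht
  rw [inter_comm] at hsplit
  omega

lemma mem_of_sgConductor_le {S : Set ℕ} (hS : Sᶜ.Finite) {n : ℕ} (hn : sgConductor S ≤ n) :
    n ∈ S := by
  have hne : {c | ∀ n, c ≤ n → n ∈ S}.Nonempty := by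
    obtain ⟨N, hN⟩ := hS.bddAbove
    refine ⟨N + 1, fun n hn => by_contra fun h => ?_⟩
    have := hN h
    omega
  exact Nat.sInf_mem hne n hn

noncomputable def sgDelta (S : Set ℕ) (δ : ℕ) : ℕ :=
  δ + 2 * (S ∩ Ico δ (sgConductor S)).ncard

namespace IsNumericalSemigroup

variable {S : Set ℕ}

lemma sgConductor_sub_one_sub_notMem (hS : IsNumericalSemigroup S) {x : ℕ} (hx : x ∈ S)
    (hxc : x < sgConductor S) :
    sgConductor S - 1 - x ∉ S := by
  intro hy
  have hsub : sgConductor S - 1 ∈ S := by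
    have := hS.2.1 x hx _ hy
    rwa [show x + (sgConductor S - 1 - x) = sgConductor S - 1 by omega] at this
  have : sgConductor S ≤ sgConductor S - 1 := Nat.sInf_le fun n hn => by
    rcases hn.eq_or_lt with rfl | hlt
    · exact hsub
    · exact mem_of_sgConductor_le hS.2.2 (by omega)
  omega

lemma two_mul_ncard_inter_Ico_le (hS : IsNumericalSemigroup S) (a : ℕ) :
    2 * (S ∩ Ico a (sgConductor S - a)).ncard ≤ sgConductor S - 2 * a := by
  set c := sgConductor S
  have hmaps : MapsTo (fun x => c - 1 - x) (S ∩ Ico a (c - a)) (Ico a (c - a) \ S) := by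
    rintro x ⟨hxS, hxa, hxc⟩
    exact ⟨⟨show a ≤ c - 1 - x by omega, show c - 1 - x < c - a by omega⟩,
      hS.sgConductor_sub_one_sub_notMem hxS (by omega)⟩
  have hinj : InjOn (fun x => c - 1 - x) (S ∩ Ico a (c - a)) := by
    rintro x ⟨-, -, hx⟩ y ⟨-, -, hy⟩ hxy
    simp only at hxy
    omega
  have := two_mul_ncard_inter_le_of_injOn (finite_Ico _ _) _ hmaps hinj
  rwa [ncard_Ico_nat, show c - a - a = c - 2 * a by omega] at this

lemma exists_sgDelta_le (hS : IsNumericalSemigroup S) {δ : ℕ} (hδ : δ ≤ sgConductor S) :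
    ∃ δ' ∈ S, δ' ≤ sgConductor S ∧ sgConductor S ≤ 2 * δ' ∧ sgDelta S δ ≤ sgDelta S δ' := by
  have hhalf := hS.two_mul_ncard_inter_Ico_le δ
  unfold sgDelta
  set c := sgConductor S
  set A := {x | x ∈ S ∧ δ ≤ x ∧ c - δ ≤ x}
  have hcA : c ∈ A := ⟨mem_of_sgConductor_le hS.2.2 le_rfl, hδ, by omega⟩
  obtain ⟨hδ'S, hδδ', hcδ'⟩ : sInf A ∈ A := Nat.sInf_mem ⟨c, hcA⟩
  have hδ'c : sInf A ≤ c := Nat.sInf_le hcA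
  -- below `δ'`, the elements of `S` that are `≥ δ` stay below `c - δ` by minimality of `δ'`
  have hcover : S ∩ Ico δ c ⊆ (S ∩ Ico δ (c - δ)) ∪ (S ∩ Ico (sInf A) c) := by
    rintro x ⟨hxS, hδx, hxc⟩
    by_cases hx : sInf A ≤ x
    · exact Or.inr ⟨hxS, hx, hxc⟩
    · exact Or.inl ⟨hxS, hδx, not_le.mp fun h => hx (Nat.sInf_le ⟨hxS, hδx, h⟩)⟩
  have hfin : ∀ a b, (S ∩ Ico a b).Finite := fun a b => (finite_Ico a b).inter_of_right S
  have hcard := (ncard_le_ncard hcover ((hfin _ _).union (hfin _ _))).trans (ncard_union_le _ _)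
  exact ⟨sInf A, hδ'S, hδ'c, by omega, by omega⟩

end IsNumericalSemigroup

/-- Δ attains its maximum over S ∩ [0, c] at some δ ≥ c/2. -/
theorem stmt12 (S : Set ℕ) (hS : IsNumericalSemigroup S) :
    ∃ δ, δ ∈ S ∧ δ ≤ sgConductor S ∧ sgConductor S ≤ 2 * δ ∧
      ∀ δ' ∈ S, δ' ≤ sgConductor S →
        δ' + 2 * (S ∩ Set.Ico δ' (sgConductor S)).ncard
          ≤ δ + 2 * (S ∩ Set.Ico δ (sgConductor S)).ncard := by
  obtain ⟨δ₀, ⟨-, hδ₀c⟩, hmax⟩ := exists_max_image {x | x ∈ S ∧ x ≤ sgConductor S}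
    (sgDelta S) ((finite_Iic _).subset fun x hx => hx.2)
    ⟨_, mem_of_sgConductor_le hS.2.2 le_rfl, le_rfl⟩
  obtain ⟨δ, hδS, hδc, hcδ, hle⟩ := hS.exists_sgDelta_le hδ₀c
  exact ⟨δ, hδS, hδc, hcδ, fun δ' hδ'S hδ'c => (hmax δ' ⟨hδ'S, hδ'c⟩).trans hle⟩
end

section
/- Let q ≥ 2 and S = ⟨q, q+1⟩ with conductor c = q(q−1). For k ∈ [0, q−1], the count n(kq) := |S ∩ [kq, c−1]| equals (q − 1 − k)(q + k)/2. -/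
lemma mem_gen_iff (q : ℕ) (hq : 1 ≤ q) (x : ℕ) :
    (∃ a b : ℕ, x = a * q + b * (q + 1)) ↔ x % q ≤ x / q := by
  constructor
  · rintro ⟨a, b, rfl⟩
    have hx : a * q + b * (q + 1) = b + (a + b) * q := by ring
    rw [hx, Nat.add_mul_mod_self_right, Nat.add_mul_div_right _ _ hq]
    exact (Nat.mod_le b q).trans ((Nat.le_add_left b a).trans
      (Nat.le_add_left (a + b) (b / q)))
  · intro h
    obtain ⟨t, ht⟩ := Nat.le.dest h
    refine ⟨t, x % q, ?_⟩
    have h1 := Nat.div_add_mod x q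
    set r := x % q with hr
    set m := x / q with hm
    rw [← h1, ← ht]; ring

lemma first_block (q k : ℕ) (hk : k + 1 < q) :
    (Finset.Ico (k * q) ((k + 1) * q)).filter (fun x => x % q ≤ x / q)
      = Finset.Ico (k * q) (k * q + (k + 1)) := by
  have hc : k * q = q * k := Nat.mul_comm k q
  ext x
  simp only [Finset.mem_filter, Finset.mem_Ico]
  constructor
  · rintro ⟨⟨h1, h2⟩, h3⟩
    have hdiv : x / q = k := Nat.div_eq_of_lt_le h1 h2
    have hmod := Nat.div_add_mod x q
    rw [hdiv] at hmod h3
    omega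
  · rintro ⟨h1, h2⟩
    have hq : 0 < q := by omega
    have hdiv : x / q = k := Nat.div_eq_of_lt_le (by omega) (by nlinarith)
    have hmod := Nat.div_add_mod x q
    rw [hdiv] at hmod
    refine ⟨⟨h1, by nlinarith⟩, ?_⟩
    omega

lemma count_aux (q : ℕ) (hq : 2 ≤ q) : ∀ d k, k + d + 1 = q →
    2 * ((Finset.Ico (k * q) (q * (q - 1))).filter (fun x => x % q ≤ x / q)).card
      = d * (q + k) := by
  intro d
  induction d with
  | zero =>
    intro k hkq
    have hkk : k * q = q * (q - 1) := by
      have : k = q - 1 := by omega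
      subst this; exact Nat.mul_comm _ _
    rw [hkk]
    simp
  | succ d ih =>
    intro k hkq
    have h1 : k * q ≤ (k + 1) * q := by nlinarith
    have h2 : (k + 1) * q ≤ q * (q - 1) := by
      have h3 : k + 1 ≤ q - 1 := by omega
      calc (k + 1) * q ≤ (q - 1) * q := by nlinarith
        _ = q * (q - 1) := by ring
    rw [← Finset.Ico_union_Ico_eq_Ico h1 h2, Finset.filter_union,
      Finset.card_union_of_disjoint
        (Finset.disjoint_filter_filter (Finset.Ico_disjoint_Ico_consecutive _ _ _)),
      first_block q k (by omega), Nat.card_Ico, Nat.add_sub_cancel_left,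
      Nat.mul_add, ih (k + 1) (by omega)]
    have hq' : q = k + d + 2 := by omega
    subst hq'
    ring

/-- For S = ⟨q, q+1⟩ and 0 ≤ k ≤ q−1, n(kq) = (q−1−k)(q+k)/2. -/
theorem stmt16 (q : ℕ) (hq : 2 ≤ q) (k : ℕ) (hk : k ≤ q - 1) :
    2 * ({x : ℕ | ∃ a b : ℕ, x = a * q + b * (q + 1)}
          ∩ Set.Ico (k * q) (q * (q - 1))).ncard
      = (q - 1 - k) * (q + k) := by
  have hset : {x : ℕ | ∃ a b : ℕ, x = a * q + b * (q + 1)}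
      ∩ Set.Ico (k * q) (q * (q - 1))
      = ↑((Finset.Ico (k * q) (q * (q - 1))).filter (fun x => x % q ≤ x / q)) := by
    ext x
    simp only [Set.mem_inter_iff, Set.mem_setOf_eq, Set.mem_Ico, Finset.coe_filter,
      Finset.mem_Ico, mem_gen_iff q (by omega) x]
    tauto
  rw [hset, Set.ncard_coe_finset, count_aux q hq (q - 1 - k) k (by omega)]
end

section
/- Let q ≥ 2 and S = ⟨q, q+1⟩ with conductor c = q(q−1). The map Δ(δ) := δ + 2·|S ∩ [δ, c−1]| attains its maximum over S ∩ [0, c] at δ = q·⌈(q−1)/2⌉. -/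
def Fc (q a b : ℕ) : ℕ := ((Finset.Ico a b).filter (fun x => x % q ≤ x / q)).card

lemma Fc_split (q a b c : ℕ) (h1 : a ≤ b) (h2 : b ≤ c) :
    Fc q a c = Fc q a b + Fc q b c := by
  unfold Fc
  rw [← Finset.card_union_of_disjoint
      (Finset.disjoint_filter_filter (Finset.Ico_disjoint_Ico_consecutive a b c)),
    ← Finset.filter_union, Finset.Ico_union_Ico_eq_Ico h1 h2]

lemma mem_row {q k x : ℕ} (hk : k < q) (h1 : k*q ≤ x) (h2 : x < k*q + q) :
    x / q = k ∧ x % q = x - k*q := by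
  have hd : x / q = k := Nat.div_eq_of_lt_le h1 (by rw [add_mul, one_mul]; omega)
  have h3 := Nat.div_add_mod x q
  rw [hd] at h3
  constructor
  · exact hd
  · have : q * k = k * q := mul_comm _ _
    omega

lemma Fc_row {q k i j : ℕ} (hk : k < q) (hj : j ≤ k+1) (hij : i ≤ j) :
    Fc q (k*q+i) (k*q+j) = j - i := by
  unfold Fc
  rw [Finset.filter_true_of_mem, Nat.card_Ico]
  · omega
  · intro x hx
    rw [Finset.mem_Ico] at hx
    obtain ⟨hd, hm⟩ := mem_row (x := x) hk (show k*q ≤ x by omega) (show x < k*q+q by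
      have : j ≤ q := by omega
      omega)
    omega

lemma Fc_gap {q k i j : ℕ} (hk : k < q) (hi : k+1 ≤ i) (hj : j ≤ q) :
    Fc q (k*q+i) (k*q+j) = 0 := by
  unfold Fc
  rw [Finset.card_eq_zero, Finset.filter_eq_empty_iff]
  intro x hx
  rw [Finset.mem_Ico] at hx
  obtain ⟨hd, hm⟩ := mem_row (x := x) hk (show k*q ≤ x by omega) (show x < k*q+q by omega)
  omega

lemma Fc_fullrow {q b : ℕ} (hb : b < q) : Fc q (b*q) (b*q+q) = b+1 := by
  have hs := Fc_split q (b*q) (b*q+(b+1)) (b*q+q) (by omega) (by omega)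
  have h1 : Fc q (b*q+0) (b*q+(b+1)) = (b+1) - 0 := Fc_row hb le_rfl (by omega)
  have h2 : Fc q (b*q+(b+1)) (b*q+q) = 0 := Fc_gap hb le_rfl le_rfl
  simp at h1
  omega

lemma Fc_block {q : ℕ} (b : ℕ) (hb : b ≤ q) : 2 * Fc q 0 (b*q) = b*(b+1) := by
  induction b with
  | zero => simp [Fc]
  | succ n ih =>
    have hs := Fc_split q 0 (n*q) ((n+1)*q) (by positivity) (by nlinarith)
    have h1 : Fc q (n*q) (n*q+q) = n+1 := Fc_fullrow (by omega)
    have h2 : (n+1)*q = n*q + q := by ring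
    rw [h2] at hs ⊢
    rw [hs, h1]
    have := ih (by omega)
    nlinarith

lemma Fc_tail {q j : ℕ} (hq : 1 ≤ q) (hj : j ≤ q-1) :
    2 * Fc q (j*q) ((q-1)*q) + j*(j+1) = (q-1)*q := by
  have hs := Fc_split q 0 (j*q) ((q-1)*q) (by positivity) (Nat.mul_le_mul_right q hj)
  have h1 := Fc_block (q := q) j (by omega)
  have h2 := Fc_block (q := q) (q-1) (by omega)
  have h3 : (q-1)*((q-1)+1) = (q-1)*q := by
    congr 1; omega
  rw [h3] at h2
  linarith


lemma arith (q h k i j G1 G2 : ℕ) (hq2 : 2 ≤ q) (hh : h = q/2) (hk : k + 2 ≤ q)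
    (hi : i ≤ k) (hij : i + j = k + 1)
    (e1 : 2*G1 + (k+1)*(k+2) = (q-1)*q) (e2 : 2*G2 + h*(h+1) = (q-1)*q) :
    k*q + i + 2*(j + G1) ≤ h*q + 2*G2 := by
  have hh1 : 2*h ≤ q := by omega
  have hh2 : q ≤ 2*h+1 := by omega
  have hq1 : 1 ≤ q := by omega
  zify [hq1] at e1 e2 ⊢
  rcases lt_trichotomy k h with hc | hc | hc
  · nlinarith [mul_nonneg (show (0:ℤ) ≤ (h:ℤ) - k by omega)
      (show (0:ℤ) ≤ (q:ℤ) - 1 - h - k by omega)]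
  · subst hc; nlinarith
  · nlinarith [mul_nonneg (show (0:ℤ) ≤ (k:ℤ) - h by omega)
      (show (0:ℤ) ≤ (h:ℤ) + k + 1 - q by omega)]

/-- For the Hermitian semigroup S = ⟨q, q+1⟩, Δ attains its maximum over
S ∩ [0, c] at δ = q·⌈(q−1)/2⌉ = q·(q/2). -/
theorem stmt17 (q : ℕ) (hq : 2 ≤ q) :
    ∀ S : Set ℕ, S = {x : ℕ | ∃ a b : ℕ, x = a * q + b * (q + 1)} →
    q * (q / 2) ∈ S ∧ q * (q / 2) ≤ sgConductor S ∧
      ∀ δ ∈ S, δ ≤ sgConductor S →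
        δ + 2 * (S ∩ Set.Ico δ (sgConductor S)).ncard
          ≤ q * (q / 2) + 2 * (S ∩ Set.Ico (q * (q / 2)) (sgConductor S)).ncard := by
  intro S hS
  have hq0 : 0 < q := by omega
  have hchar : ∀ x, x ∈ S ↔ x % q ≤ x / q := by
    intro x
    rw [hS]
    constructor
    · rintro ⟨a, b, rfl⟩
      have hx : a * q + b * (q+1) = q * (a+b) + b := by ring
      rw [hx, Nat.mul_add_div hq0, Nat.mul_add_mod]
      linarith [Nat.mod_le b q, Nat.zero_le (b/q), Nat.zero_le a]
    · intro hx
      refine ⟨x / q - x % q, x % q, ?_⟩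
      have h3 := Nat.div_add_mod x q
      obtain ⟨s, hs⟩ : ∃ s, x / q = x % q + s := ⟨x / q - x % q, by omega⟩
      have hss : x / q - x % q = s := by omega
      rw [hss]
      rw [hs] at h3
      zify at h3 ⊢
      linear_combination - h3
  have hcoe : ∀ a b : ℕ, (S ∩ Set.Ico a b).ncard = Fc q a b := by
    intro a b
    have hst : S ∩ Set.Ico a b
        = ((Finset.Ico a b).filter (fun x => x % q ≤ x / q) : Finset ℕ) := by
      ext x
      simp only [Set.mem_inter_iff, Set.mem_Ico, Finset.coe_filter, Finset.mem_Ico,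
        Set.mem_setOf_eq, hchar]
      tauto
    rw [hst, Set.ncard_coe_finset, Fc]
  have hc : sgConductor S = (q-1)*q := by
    unfold sgConductor
    apply le_antisymm
    · apply Nat.sInf_le
      intro n hn
      rw [hchar]
      have h1 : n % q < q := Nat.mod_lt _ hq0
      have h2 : q - 1 ≤ n / q := (Nat.le_div_iff_mul_le hq0).2 hn
      omega
    · apply le_csInf
      · exact ⟨(q-1)*q, fun n hn => by
          rw [hchar]
          have h1 := Nat.mod_lt n hq0
          have h2 := (Nat.le_div_iff_mul_le hq0).2 hn
          omega⟩
      intro y hy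
      by_contra hlt
      push_neg at hlt
      have e : (q-1)*q = (q-2)*q + q := by
        have h5 : q - 1 = (q-2) + 1 := by omega
        rw [h5, add_mul, one_mul]
      have hmem : (q-2)*q + (q-1) ∈ S := hy _ (by omega)
      rw [hchar] at hmem
      obtain ⟨hd, hm⟩ := mem_row (q:=q) (k:=q-2) (x:=(q-2)*q+(q-1))
        (by omega) (by omega) (by omega)
      omega
  refine ⟨?_, ?_, ?_⟩
  · rw [hchar, Nat.mul_mod_right]
    exact Nat.zero_le _
  · rw [hc, mul_comm q (q/2)]
    exact Nat.mul_le_mul_right q (by omega)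
  · intro delta hdelta hdc
    rw [hc] at hdc ⊢
    rw [hcoe, hcoe, mul_comm q (q/2)]
    have hhq : q / 2 ≤ q - 1 := by omega
    have e2' := Fc_tail (q:=q) (j:=q/2) (by omega) hhq
    have hik : delta % q ≤ delta / q := (hchar delta).1 hdelta
    have h3 := Nat.div_add_mod delta q
    set k := delta / q with hk
    set i := delta % q with hi
    have hiq : i < q := Nat.mod_lt _ hq0
    have hdeq : delta = k * q + i := by rw [mul_comm k q]; linarith
    have hkq : k + 1 ≤ q := by
      by_contra hcon
      push_neg at hcon
      have h5 : q * q ≤ k * q := Nat.mul_le_mul_right q (by omega)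
      have h6 : (q-1)*q < q*q := (Nat.mul_lt_mul_right hq0).2 (by omega)
      linarith
    rcases Nat.lt_or_ge k (q-1) with hk2 | hk2
    · have e1' := Fc_tail (q:=q) (j:=k+1) (by omega) (by omega)
      have split1 := Fc_split q (k*q+i) ((k+1)*q) ((q-1)*q)
        (by rw [add_mul, one_mul]; omega) (Nat.mul_le_mul_right q (by omega))
      have row := Fc_row (q:=q) (k:=k) (i:=i) (j:=k+1) (by omega) le_rfl (by omega)
      have gap := Fc_gap (q:=q) (k:=k) (i:=k+1) (j:=q) (by omega) le_rfl le_rfl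
      have split0 := Fc_split q (k*q+i) (k*q+(k+1)) (k*q+q) (by omega) (by omega)
      have hq' : (k+1)*q = k*q + q := by ring
      rw [hdeq, split1, hq', split0, row, gap]
      have heq : (k+1)*((k+1)+1) = (k+1)*(k+2) := by ring
      rw [hq', heq] at e1'
      have key := arith q (q/2) k i (k+1-i) (Fc q (k*q+q) ((q-1)*q))
        (Fc q (q/2*q) ((q-1)*q)) hq rfl (by omega) hik (by omega) e1' e2'
      linarith
    · have hkeq : k = q-1 := by omega
      have hcc : k * q = (q-1) * q := by rw [hkeq]
      have hi0 : i = 0 := by linarith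
      have hFc0 : Fc q delta ((q-1)*q) = 0 := by
        rw [hdeq, hi0, hkeq, add_zero, Fc]
        simp
      rw [hFc0]
      have hmul : q/2*(q/2+1) ≤ q/2*q := Nat.mul_le_mul_left (q/2) (by omega)
      have hdval : delta = (q-1)*q := by rw [hdeq, hi0, add_zero, hcc]
      linarith
end
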